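/- (Sufficiency for design-consistency) Let (A,B) and (Ã,B̃) be systems with B̃ = B, and let V = K_n(A,[x₀ B]) be the visible subspace for initial state x₀. If Ãv = Av for all v ∈ V, then for every continuous input u and every t ≥ 0, the trajectories coincide: e^{Ãt} x₀ + ∫₀ᵗ e^{Ã(t−s)} B u(s) ds = e^{At} x₀ + ∫₀ᵗ e^{A(t−s)} B u(s) ds. -/

import Mathlib

/-!
By Cayley–Hamilton every power `A ^ k` is a polynomial of degree `< n` in `A`, so the visible
subspace `V` is `A`-invariant. A matrix `Ã` agreeing with `A` on an `A`-invariant subspace agrees with it there in every power,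
hence, term by term in the exponential series, `e^{Ãc} v = e^{Ac} v` for `v ∈ V`. Both `x₀` and
every `B u(s)` lie in `V`, so the free and forced responses coincide.
-/

/-- The visible subspace `V(x₀) = K_n(A, [x₀ B])`. -/
def visibleSubspace {n m : ℕ} (A : Matrix (Fin n) (Fin n) ℝ) (B : Matrix (Fin n) (Fin m) ℝ)
    (x0 : Fin n → ℝ) : Submodule ℝ (Fin n → ℝ) :=
  Submodule.span ℝ
    ({v | ∃ k < n, v = (A ^ k).mulVec x0} ∪
      {v | ∃ k < n, ∃ j : Fin m, v = (A ^ k).mulVec (fun i => B i j)})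

open Matrix

open Polynomial in
theorem Matrix.pow_mulVec_mem_span_pow_mulVec {R : Type*} [CommRing R] [Nontrivial R] {n : ℕ}
    (M : Matrix (Fin n) (Fin n) R) (w : Fin n → R) (k : ℕ) :
    (M ^ k) *ᵥ w ∈ Submodule.span R {v | ∃ i < n, v = (M ^ i) *ᵥ w} := by
  rcases n.eq_zero_or_pos with rfl | hn
  · rw [Subsingleton.elim ((M ^ k) *ᵥ w) 0]
    exact Submodule.zero_mem _
  have hdeg : (X ^ k %ₘ M.charpoly).natDegree < n := by
    have hpos : 0 < M.charpoly.natDegree := by simpa using hn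
    simpa using natDegree_modByMonic_lt _ M.charpoly_monic fun h => by simp [h] at hpos
  rw [pow_eq_aeval_mod_charpoly, aeval_eq_sum_range' hdeg, Matrix.sum_mulVec]
  exact Submodule.sum_mem _ fun i hi => by
    rw [smul_mulVec]
    exact Submodule.smul_mem _ _ (Submodule.subset_span ⟨i, Finset.mem_range.mp hi, rfl⟩)

theorem Matrix.pow_mulVec_eq_of_eqOn {R ι : Type*} [CommSemiring R] [Fintype ι] [DecidableEq ι]
    {A A' : Matrix ι ι R} {s : Set (ι → R)} (hs : Set.MapsTo (A *ᵥ ·) s s)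
    (h : Set.EqOn (A' *ᵥ ·) (A *ᵥ ·) s) (k : ℕ) {v : ι → R} (hv : v ∈ s) :
    (A' ^ k) *ᵥ v = (A ^ k) *ᵥ v := by
  induction k generalizing v with
  | zero => simp
  | succ k ih =>
    rw [pow_succ, pow_succ, ← mulVec_mulVec, ← mulVec_mulVec, show A' *ᵥ v = A *ᵥ v from h hv, ih (hs hv)]

theorem ContinuousLinearMap.map_exp_eq_of_map_pow_eq {𝕂 𝔸 E : Type*} [RCLike 𝕂] [NormedRing 𝔸]
    [NormedAlgebra 𝕂 𝔸] [CompleteSpace 𝔸] [AddCommMonoid E] [Module 𝕂 E] [TopologicalSpace E]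
    [T2Space E] (L : 𝔸 →L[𝕂] E) {a b : 𝔸} (h : ∀ k : ℕ, L (a ^ k) = L (b ^ k)) :
    L (NormedSpace.exp a) = L (NormedSpace.exp b) := by
  simp only [NormedSpace.exp_eq_tsum 𝕂, L.map_tsum (NormedSpace.expSeries_summable' _), map_smul,
    h]

theorem Matrix.exp_mulVec_eq_of_pow_mulVec_eq {𝕂 ι : Type*} [RCLike 𝕂] [Fintype ι]
    [DecidableEq ι] {A A' : Matrix ι ι 𝕂} {v : ι → 𝕂} (h : ∀ k : ℕ, (A' ^ k) *ᵥ v = (A ^ k) *ᵥ v) :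
    NormedSpace.exp A' *ᵥ v = NormedSpace.exp A *ᵥ v := by
  open scoped Norms.Operator in
  let L : Matrix ι ι 𝕂 →L[𝕂] ι → 𝕂 :=
    { toFun := (· *ᵥ v)
      map_add' := fun M N => add_mulVec M N v
      map_smul' := fun c M => smul_mulVec c M v
      cont := continuous_id.matrix_mulVec continuous_const }
  exact L.map_exp_eq_of_map_pow_eq h

section visibleSubspace

variable {n m : ℕ} {A : Matrix (Fin n) (Fin n) ℝ} {B : Matrix (Fin n) (Fin m) ℝ} {x0 : Fin n → ℝ}

theorem pow_mulVec_mem_visibleSubspace {w : Fin n → ℝ}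
    (hw : ∀ i < n, (A ^ i) *ᵥ w ∈ visibleSubspace A B x0) (k : ℕ) :
    (A ^ k) *ᵥ w ∈ visibleSubspace A B x0 :=
  Submodule.span_le.mpr (by rintro _ ⟨i, hi, rfl⟩; exact hw i hi)
    (A.pow_mulVec_mem_span_pow_mulVec w k)

theorem pow_mulVec_self_mem_visibleSubspace (k : ℕ) :
    (A ^ k) *ᵥ x0 ∈ visibleSubspace A B x0 :=
  pow_mulVec_mem_visibleSubspace
    (fun i hi => Submodule.subset_span (Or.inl ⟨i, hi, rfl⟩)) k

theorem pow_mulVec_col_mem_visibleSubspace (k : ℕ) (j : Fin m) :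
    (A ^ k) *ᵥ B.col j ∈ visibleSubspace A B x0 :=
  pow_mulVec_mem_visibleSubspace
    (fun i hi => Submodule.subset_span (Or.inr ⟨i, hi, j, rfl⟩)) k

theorem mulVec_mem_visibleSubspace (w : Fin m → ℝ) : B *ᵥ w ∈ visibleSubspace A B x0 := by
  have hcols : Submodule.span ℝ (Set.range B.col) ≤ visibleSubspace A B x0 :=
    Submodule.span_le.mpr <| Set.range_subset_iff.mpr fun j => by
      simpa using pow_mulVec_col_mem_visibleSubspace (A := A) (x0 := x0) 0 j
  exact hcols (B.range_mulVecLin ▸ LinearMap.mem_range_self B.mulVecLin w)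

theorem mapsTo_visibleSubspace :
    Set.MapsTo (A *ᵥ ·) (visibleSubspace A B x0 : Set (Fin n → ℝ)) (visibleSubspace A B x0) := by
  suffices visibleSubspace A B x0 ≤ (visibleSubspace A B x0).comap A.mulVecLin from
    fun v hv => this hv
  refine Submodule.span_le.mpr ?_
  rintro _ (⟨k, -, rfl⟩ | ⟨k, -, j, rfl⟩) <;>
    simp only [SetLike.mem_coe, Submodule.mem_comap, mulVecLin_apply, mulVec_mulVec, ← pow_succ']
  · exact pow_mulVec_self_mem_visibleSubspace _
  · exact pow_mulVec_col_mem_visibleSubspace _ j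

end visibleSubspace

/-- Sufficiency for design-consistency: if `B̃ = B` and `Ã` agrees with `A` on
the visible subspace `V = K_n(A, [x₀ B])`, then for every continuous input `u` and every
`t ≥ 0` the trajectories of the two systems coincide. -/
theorem sufficiency_design_consistency {n m : ℕ} (A At : Matrix (Fin n) (Fin n) ℝ)
    (B : Matrix (Fin n) (Fin m) ℝ) (x0 : Fin n → ℝ)
    (hagree : ∀ v ∈ visibleSubspace A B x0, At.mulVec v = A.mulVec v) :
    ∀ (u : ℝ → Fin m → ℝ), Continuous u → ∀ t : ℝ, 0 ≤ t →
      (NormedSpace.exp (t • At)).mulVec x0 +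
          (∫ s in (0:ℝ)..t, (NormedSpace.exp ((t - s) • At)).mulVec (B.mulVec (u s))) =
        (NormedSpace.exp (t • A)).mulVec x0 +
          ∫ s in (0:ℝ)..t, (NormedSpace.exp ((t - s) • A)).mulVec (B.mulVec (u s)) := by
  intro u _ t _
  have hexp : ∀ c : ℝ, ∀ v ∈ visibleSubspace A B x0,
      NormedSpace.exp (c • At) *ᵥ v = NormedSpace.exp (c • A) *ᵥ v := fun c v hv =>
    exp_mulVec_eq_of_pow_mulVec_eq fun k => by
      rw [smul_pow, smul_pow, smul_mulVec, smul_mulVec,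
        pow_mulVec_eq_of_eqOn mapsTo_visibleSubspace hagree k hv]
  rw [hexp t x0 (by simpa using pow_mulVec_self_mem_visibleSubspace (B := B) 0),
    intervalIntegral.integral_congr fun s _ => hexp (t - s) _ (mulVec_mem_visibleSubspace (u s))]
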